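/- arXiv:2210.00360 — 3 statements merged into one kernel-verified Lean document; each statement's English description precedes it below -/
import Mathlib

section
/- For every n ≥ 1, Φ_n = T_n*(1/n) = T^inf(1/n): the minimum value in the cyclic problem equals the minimum value of the non-cyclic problem with N = n and p = 1/n, and also equals the limit value T^inf(1/n). -/
open Finset Filter Topology
open scoped ENNReal

/-- Interval average `a_{[a:b]}(x) = (x_a + … + x_b)/(b-a+1)`. -/
noncomputable def iavg (x : ℤ → ℝ) (a b : ℤ) : ℝ :=
  (∑ j ∈ Finset.Icc a b, x j) / ((b - a + 1 : ℤ) : ℝ)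

/-- Maximal forward average `m_i^+(x) = sup_{r ≥ 1} a_{[i+1 : i+r]}(x)`
(cyclic problem). -/
noncomputable def mplus (x : ℤ → ℝ) (i : ℤ) : ℝ :=
  sSup {a : ℝ | ∃ r : ℕ, 1 ≤ r ∧ a = iavg x (i + 1) (i + (r : ℤ))}

/-- The cyclic sum `S_n^max(x) = Σ_{i=1}^n x_i / m_i^+(x)`, valued in `ℝ≥0∞`
(a term with `x_i = 0` is `0`). -/
noncomputable def SmaxE (n : ℕ) (x : ℤ → ℝ) : ℝ≥0∞ :=
  ∑ i ∈ Finset.Icc (1 : ℤ) (n : ℤ), ENNReal.ofReal (x i) / ENNReal.ofReal (mplus x i)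

/-- `Φ_n`: infimum of `S_n^max(x)` over nonnegative `n`-periodic `x ≠ 0`. -/
noncomputable def PhiE (n : ℕ) : ℝ≥0∞ :=
  sInf {t : ℝ≥0∞ | ∃ x : ℤ → ℝ, (∀ i, 0 ≤ x i) ∧ (∀ i, x (i + (n : ℤ)) = x i) ∧
    (∃ i, x i ≠ 0) ∧ t = SmaxE n x}

/-- Non-cyclic maximal forward average for `i < 0`:
`m_i^+(x) = max_{1 ≤ r ≤ −i} (x_{i+1} + … + x_{i+r})/r`. -/
noncomputable def mNeg (x : ℤ → ℝ) (i : ℤ) : ℝ :=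
  sSup {a : ℝ | ∃ r : ℤ, 1 ≤ r ∧ r ≤ -i ∧
    a = (∑ j ∈ Finset.Icc (i + 1) (i + r), x j) / (r : ℝ)}

/-- `T(x,p) = Σ_{i ≤ −1} x_i/m_i^+(x) + x_0/p`, valued in `ℝ≥0∞`: a term with
`x_i = 0` is `0`, and the value is `+∞` if `x_i > 0` and `m_i^+(x) = 0` for
some `i ≤ −1`. -/
noncomputable def Tval (x : ℤ → ℝ) (p : ℝ) : ℝ≥0∞ :=
  (∑' i : {z : ℤ // z ≤ -1}, ENNReal.ofReal (x i) / ENNReal.ofReal (mNeg x i)) +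
    ENNReal.ofReal (x 0) / ENNReal.ofReal p

/-- `Δ_N`: sequences `(x_i)_{i ≤ 0}` of nonnegative reals with `x_i = 0` for
`i ≤ -N` and `x_{1−N} + … + x_0 = 1` (encoded as functions on `ℤ` vanishing
at positive indices). -/
def Delta (N : ℕ) : Set (ℤ → ℝ) :=
  {x | (∀ i, 0 ≤ x i) ∧ (∀ i : ℤ, i ≤ -(N : ℤ) → x i = 0) ∧
    (∀ i : ℤ, 0 < i → x i = 0) ∧ ∑ i ∈ Finset.Icc (1 - (N : ℤ)) 0, x i = 1}

/-- `T_N*(p) = inf_{x ∈ Δ_N} T(x,p)`. -/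
noncomputable def Tstar (N : ℕ) (p : ℝ) : ℝ≥0∞ :=
  sInf {t : ℝ≥0∞ | ∃ x ∈ Delta N, t = Tval x p}

/-! ### Auxiliary interval-sum lemmas -/

section Aux
variable {M : Type*} [AddCommMonoid M]

lemma IccIoc (a b : ℤ) : Finset.Icc (a+1) b = Finset.Ioc a b := by
  ext t; simp [Int.add_one_le_iff]

lemma sum_Ioc_cons (f : ℤ → M) {a b c : ℤ} (h1 : a ≤ b) (h2 : b ≤ c) :
    (∑ i ∈ Ioc a b, f i) + ∑ i ∈ Ioc b c, f i = ∑ i ∈ Ioc a c, f i := by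
  have hdisj : Disjoint (Finset.Ioc a b) (Finset.Ioc b c) := by
    rw [Finset.disjoint_left]
    intro t ht ht'
    simp only [Finset.mem_Ioc] at ht ht'
    omega
  rw [← Finset.sum_union hdisj, Finset.Ioc_union_Ioc_eq_Ioc h1 h2]

lemma sum_shiftIoc (g : ℤ → M) (a b c : ℤ) :
    ∑ i ∈ Ioc (a+c) (b+c), g i = ∑ i ∈ Ioc a b, g (i + c) := by
  rw [← Finset.map_add_right_Ioc, Finset.sum_map]; rfl

lemma int_eq_of_dvd_of_Ioc {n a b k : ℤ} (hd : n ∣ a - b)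
    (ha1 : k < a) (ha2 : a ≤ k + n) (hb1 : k < b) (hb2 : b ≤ k + n) : a = b := by
  have h : a - b = 0 := Int.eq_zero_of_abs_lt_dvd hd (by rw [abs_lt]; omega)
  omega

lemma per_mul {n : ℕ} (g : ℤ → M) (hper : ∀ i, g (i + (n:ℤ)) = g i) (t : ℤ) (q : ℤ) :
    g (t + q * (n:ℤ)) = g t := by
  induction q using Int.induction_on with
  | zero => simp
  | succ k ih => rw [show t + ((k:ℤ)+1) * n = (t + k * n) + n by ring, hper, ih]
  | pred k ih =>
      have h := hper (t + (-(k:ℤ)-1) * n)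
      rw [show t + (-(k:ℤ)-1) * (n:ℤ) + n = t + (-(k:ℤ)) * n by ring] at h
      exact h.symm.trans ih

lemma rep_exists (n : ℕ) (hn : 1 ≤ n) (k j : ℤ) :
    j + (n:ℤ) * ((k-j)/(n:ℤ)) + (n:ℤ) ∈ Ioc k (k + (n:ℤ)) ∧
      (n:ℤ) ∣ (j + (n:ℤ) * ((k-j)/(n:ℤ)) + (n:ℤ)) - j := by
  have hn0 : (0:ℤ) < (n:ℤ) := by exact_mod_cast hn
  constructor
  · have h1 : 0 ≤ (k-j) % (n:ℤ) := Int.emod_nonneg _ hn0.ne'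
    have h2 : (k-j) % (n:ℤ) < (n:ℤ) := Int.emod_lt_of_pos _ hn0
    have h3 : (k-j) % (n:ℤ) + (n:ℤ) * ((k-j)/(n:ℤ)) = k-j := Int.emod_add_mul_ediv _ _
    simp only [Finset.mem_Ioc]
    omega
  · exact ⟨(k-j)/(n:ℤ) + 1, by ring⟩

lemma periodic_sum_Ioc (n : ℕ) (g : ℤ → M) (hper : ∀ i, g (i + (n:ℤ)) = g i) (k : ℤ) :
    ∑ i ∈ Ioc k (k + (n:ℤ)), g i = ∑ i ∈ Ioc (0:ℤ) (n:ℤ), g i := by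
  rcases Nat.eq_zero_or_pos n with h0 | hpos
  · subst h0; simp
  have hn0 : (0:ℤ) < (n:ℤ) := by exact_mod_cast hpos
  set nz := (n:ℤ) with hnz
  set φ : ℤ → ℤ := fun a => a - nz * ((a-1)/nz) with hφ
  set ψ : ℤ → ℤ := fun j => j + nz * ((k-j)/nz) + nz with hψ
  have hφmem : ∀ a, φ a ∈ Ioc (0:ℤ) nz := by
    intro a
    have h1 : 0 ≤ (a-1) % nz := Int.emod_nonneg _ hn0.ne'
    have h2 : (a-1) % nz < nz := Int.emod_lt_of_pos _ hn0
    have h3 : (a-1) % nz + nz * ((a-1)/nz) = a-1 := Int.emod_add_mul_ediv _ _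
    simp only [hφ, Finset.mem_Ioc]
    omega
  have hψmem : ∀ j, ψ j ∈ Ioc k (k + nz) := fun j => (rep_exists n hpos k j).1
  have hφdvd : ∀ a, nz ∣ a - φ a := fun a => ⟨(a-1)/nz, by simp only [hφ]; ring⟩
  have hψdvd : ∀ j, nz ∣ ψ j - j := fun j => (rep_exists n hpos k j).2
  refine Finset.sum_nbij' φ ψ (fun a _ => hφmem a) (fun j _ => hψmem j) ?_ ?_ ?_
  · intro a ha
    refine int_eq_of_dvd_of_Ioc (n := nz) (k := k) ?_
      (Finset.mem_Ioc.mp (hψmem (φ a))).1 (Finset.mem_Ioc.mp (hψmem (φ a))).2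
      (Finset.mem_Ioc.mp ha).1 (Finset.mem_Ioc.mp ha).2
    have d1 := hψdvd (φ a)
    have d2 := hφdvd a
    have he : ψ (φ a) - a = (ψ (φ a) - φ a) - (a - φ a) := by ring
    rw [he]
    exact dvd_sub d1 d2
  · intro j hj
    refine int_eq_of_dvd_of_Ioc (n := nz) (k := 0) ?_
      (Finset.mem_Ioc.mp (hφmem (ψ j))).1
      (by simpa using (Finset.mem_Ioc.mp (hφmem (ψ j))).2)
      (Finset.mem_Ioc.mp hj).1 (by simpa using (Finset.mem_Ioc.mp hj).2)
    have d1 := hφdvd (ψ j)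
    have d2 := hψdvd j
    have he : φ (ψ j) - j = (ψ j - j) - (ψ j - φ (ψ j)) := by ring
    rw [he]
    exact dvd_sub d2 d1
  · intro a ha
    have heq : a = φ a + ((a-1)/nz) * nz := by simp only [hφ]; ring
    have h2 := per_mul g hper (φ a) ((a-1)/nz)
    rw [← heq] at h2
    exact h2
end Aux

/-! ### Basic facts on `mplus` for nonnegative periodic sequences -/

section Cyclic
variable {n : ℕ} {x : ℤ → ℝ}

lemma iavg_Ioc (x : ℤ → ℝ) (i : ℤ) (r : ℕ) :
    iavg x (i+1) (i + (r:ℤ)) = (∑ j ∈ Ioc i (i + (r:ℤ)), x j) / (r:ℝ) := by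
  rw [iavg, IccIoc]
  congr 1
  have h : i + (r:ℤ) - (i + 1) + 1 = (r:ℤ) := by ring
  rw [h]
  simp

lemma x_rep (hn : 1 ≤ n) (hper : ∀ i, x (i + (n:ℤ)) = x i) (t : ℤ) :
    ∃ t' ∈ Ioc (0:ℤ) (n:ℤ), x t = x t' := by
  have hn0 : (0:ℤ) < (n:ℤ) := by exact_mod_cast hn
  refine ⟨t - (n:ℤ) * ((t-1)/(n:ℤ)), ?_, ?_⟩
  · have h1 : 0 ≤ (t-1) % (n:ℤ) := Int.emod_nonneg _ hn0.ne'
    have h2 : (t-1) % (n:ℤ) < (n:ℤ) := Int.emod_lt_of_pos _ hn0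
    have h3 : (t-1) % (n:ℤ) + (n:ℤ) * ((t-1)/(n:ℤ)) = t-1 := Int.emod_add_mul_ediv _ _
    simp only [Finset.mem_Ioc]
    omega
  · have h2 := per_mul x hper (t - (n:ℤ) * ((t-1)/(n:ℤ))) ((t-1)/(n:ℤ))
    rw [show t - (n:ℤ) * ((t-1)/(n:ℤ)) + ((t-1)/(n:ℤ)) * (n:ℤ) = t by ring] at h2
    exact h2

lemma x_le_sum (hn : 1 ≤ n) (hnn : ∀ i, 0 ≤ x i) (hper : ∀ i, x (i + (n:ℤ)) = x i) (t : ℤ) :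
    x t ≤ ∑ i ∈ Ioc (0:ℤ) (n:ℤ), x i := by
  obtain ⟨t', ht', he⟩ := x_rep hn hper t
  rw [he]
  exact Finset.single_le_sum (fun i _ => hnn i) ht'

lemma sum_Ioc_nonneg (hnn : ∀ i, 0 ≤ x i) (a b : ℤ) : 0 ≤ ∑ j ∈ Ioc a b, x j :=
  Finset.sum_nonneg fun j _ => hnn j

lemma mplus_bdd (hn : 1 ≤ n) (hnn : ∀ i, 0 ≤ x i) (hper : ∀ i, x (i + (n:ℤ)) = x i) (i : ℤ) :
    BddAbove {a : ℝ | ∃ r : ℕ, 1 ≤ r ∧ a = iavg x (i + 1) (i + (r : ℤ))} := by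
  refine ⟨∑ j ∈ Ioc (0:ℤ) (n:ℤ), x j, ?_⟩
  rintro a ⟨r, hr, rfl⟩
  rw [iavg_Ioc]
  have hr0 : (0:ℝ) < (r:ℝ) := by exact_mod_cast hr
  rw [div_le_iff₀ hr0]
  calc ∑ j ∈ Ioc i (i + (r:ℤ)), x j ≤ ∑ j ∈ Ioc i (i + (r:ℤ)), (∑ j' ∈ Ioc (0:ℤ) (n:ℤ), x j') :=
        Finset.sum_le_sum fun j _ => x_le_sum hn hnn hper j
    _ = (∑ j' ∈ Ioc (0:ℤ) (n:ℤ), x j') * r := by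
        rw [Finset.sum_const, Int.card_Ioc]
        have h : (i + (r:ℤ) - i).toNat = r := by omega
        rw [h, nsmul_eq_mul, mul_comm]

lemma avg_le_mplus (hn : 1 ≤ n) (hnn : ∀ i, 0 ≤ x i) (hper : ∀ i, x (i + (n:ℤ)) = x i)
    (i : ℤ) (r : ℕ) (hr : 1 ≤ r) :
    (∑ j ∈ Ioc i (i + (r:ℤ)), x j) / (r:ℝ) ≤ mplus x i := by
  rw [← iavg_Ioc]
  exact le_csSup (mplus_bdd hn hnn hper i) ⟨r, hr, rfl⟩

lemma mplus_le_of (i : ℤ) (c : ℝ)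
    (h : ∀ r : ℕ, 1 ≤ r → (∑ j ∈ Ioc i (i + (r:ℤ)), x j) / (r:ℝ) ≤ c) :
    mplus x i ≤ c := by
  refine csSup_le ⟨iavg x (i+1) (i+(1:ℕ)), 1, le_refl 1, rfl⟩ ?_
  rintro a ⟨r, hr, rfl⟩
  rw [iavg_Ioc]
  exact h r hr

lemma mplus_nonneg (hn : 1 ≤ n) (hnn : ∀ i, 0 ≤ x i) (hper : ∀ i, x (i + (n:ℤ)) = x i) (i : ℤ) :
    0 ≤ mplus x i := by
  refine le_trans ?_ (avg_le_mplus hn hnn hper i 1 le_rfl)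
  apply div_nonneg (sum_Ioc_nonneg hnn _ _)
  norm_num

lemma sum_Ioc_add_period (hper : ∀ i, x (i + (n:ℤ)) = x i) (a b : ℤ) :
    ∑ j ∈ Ioc (a+(n:ℤ)) (b+(n:ℤ)), x j = ∑ j ∈ Ioc a b, x j := by
  rw [sum_shiftIoc]
  exact Finset.sum_congr rfl fun j _ => hper j

lemma mplus_periodic (hper : ∀ i, x (i + (n:ℤ)) = x i) (i : ℤ) :
    mplus x (i + (n:ℤ)) = mplus x i := by
  unfold mplus
  congr 1
  have hae : ∀ r : ℕ, iavg x (i + (n:ℤ) + 1) (i + (n:ℤ) + (r:ℤ)) = iavg x (i+1) (i+(r:ℤ)) := by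
    intro r
    rw [iavg_Ioc, iavg_Ioc]
    congr 1
    have h := sum_Ioc_add_period hper i (i + (r:ℤ))
    rw [show i + (r:ℤ) + (n:ℤ) = i + (n:ℤ) + (r:ℤ) by ring] at h
    exact h
  ext a
  exact ⟨fun ⟨r, hr, he⟩ => ⟨r, hr, he.trans (hae r)⟩,
    fun ⟨r, hr, he⟩ => ⟨r, hr, he.trans (hae r).symm⟩⟩

lemma mplus_ge_inv_n (hn : 1 ≤ n) (hnn : ∀ i, 0 ≤ x i) (hper : ∀ i, x (i + (n:ℤ)) = x i)
    (hsum : ∑ j ∈ Ioc (0:ℤ) (n:ℤ), x j = 1) (i : ℤ) :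
    1/(n:ℝ) ≤ mplus x i := by
  have h := avg_le_mplus hn hnn hper i n hn
  rw [periodic_sum_Ioc n x hper i, hsum] at h
  exact h
end Cyclic
noncomputable def fA (n : ℕ) (x : ℤ → ℝ) (k : ℤ) : ℝ := (∑ j ∈ Ioc (0:ℤ) k, x j) - (k:ℝ)/(n:ℝ)

section NormA
variable {n : ℕ} {x : ℤ → ℝ} {k0 : ℤ}

lemma sum_peel (hper : ∀ i, x (i + (n:ℤ)) = x i) (hsum : ∑ j ∈ Ioc (0:ℤ) (n:ℤ), x j = 1)
    (q : ℕ) : ∀ (a s : ℤ), 0 ≤ s →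
    ∑ j ∈ Ioc a (a + ((q:ℤ) * (n:ℤ) + s)), x j = (q:ℝ) + ∑ j ∈ Ioc a (a+s), x j := by
  induction q with
  | zero => intro a s hs; norm_num
  | succ q ih =>
      intro a s hs
      have hn0 : (0:ℤ) ≤ (n:ℤ) := Int.ofNat_nonneg n
      have hq0 : (0:ℤ) ≤ (q:ℤ) := Int.ofNat_nonneg q
      have h1 : a ≤ a + (n:ℤ) := by omega
      have h2 : a + (n:ℤ) ≤ a + (((q:ℕ)+1 : ℕ) * (n:ℤ) + s) := by push_cast; nlinarith
      have hsplit := sum_Ioc_cons x h1 h2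
      have e1 : ∑ j ∈ Ioc a (a + (n:ℤ)), x j = 1 := by
        rw [periodic_sum_Ioc n x hper a]; exact hsum
      have e2 : a + (((q:ℕ)+1 : ℕ) * (n:ℤ) + s) = (a + (n:ℤ)) + ((q:ℤ) * (n:ℤ) + s) := by
        push_cast; ring
      rw [e2] at hsplit ⊢
      rw [← hsplit, e1, ih (a + (n:ℤ)) s hs]
      have e3 : ∑ j ∈ Ioc (a+(n:ℤ)) (a + (n:ℤ) + s), x j = ∑ j ∈ Ioc a (a+s), x j := by
        have := sum_Ioc_add_period hper a (a + s)
        rw [show a + s + (n:ℤ) = a + (n:ℤ) + s by ring] at this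
        exact this
      rw [e3]
      push_cast
      ring

lemma fA_per (hn : 1 ≤ n) (hper : ∀ i, x (i + (n:ℤ)) = x i)
    (hsum : ∑ j ∈ Ioc (0:ℤ) (n:ℤ), x j = 1) (k : ℤ) (hk : 0 ≤ k) :
    fA n x (k + (n:ℤ)) = fA n x k := by
  have hn0 : (0:ℝ) < (n:ℝ) := by exact_mod_cast hn
  unfold fA
  have h1 : (∑ j ∈ Ioc (0:ℤ) k, x j) + ∑ j ∈ Ioc k (k + (n:ℤ)), x j
      = ∑ j ∈ Ioc (0:ℤ) (k + (n:ℤ)), x j := sum_Ioc_cons x hk (by omega)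
  have h2 : ∑ j ∈ Ioc k (k + (n:ℤ)), x j = 1 := by
    rw [periodic_sum_Ioc n x hper k]; exact hsum
  rw [← h1, h2]
  push_cast
  field_simp
  ring

lemma fA_max_all (hn : 1 ≤ n) (hper : ∀ i, x (i + (n:ℤ)) = x i)
    (hsum : ∑ j ∈ Ioc (0:ℤ) (n:ℤ), x j = 1)
    (hk0 : k0 ∈ Finset.Icc (0:ℤ) ((n:ℤ)-1))
    (hmax : ∀ m ∈ Finset.Icc (0:ℤ) ((n:ℤ)-1), fA n x m ≤ fA n x k0)
    (m : ℤ) (hm0 : 0 ≤ m) (hm1 : m ≤ 2*(n:ℤ) - 2) : fA n x m ≤ fA n x k0 := by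
  rcases le_or_gt m ((n:ℤ)-1) with h | h
  · exact hmax m (Finset.mem_Icc.mpr ⟨hm0, h⟩)
  · have := fA_per hn hper hsum (m - (n:ℤ)) (by omega)
    rw [show m - (n:ℤ) + (n:ℤ) = m by ring] at this
    rw [this]
    exact hmax _ (Finset.mem_Icc.mpr ⟨by omega, by omega⟩)

lemma F3 (hn : 1 ≤ n) (hper : ∀ i, x (i + (n:ℤ)) = x i)
    (hsum : ∑ j ∈ Ioc (0:ℤ) (n:ℤ), x j = 1)
    (hk0 : k0 ∈ Finset.Icc (0:ℤ) ((n:ℤ)-1))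
    (hmax : ∀ m ∈ Finset.Icc (0:ℤ) ((n:ℤ)-1), fA n x m ≤ fA n x k0)
    (r : ℤ) (hr : 1 ≤ r) :
    ∑ j ∈ Ioc k0 (k0 + r), x j ≤ (r:ℝ)/(n:ℝ) := by
  have hnz : (n:ℤ) ≠ 0 := by positivity
  have hn0 : (0:ℤ) < (n:ℤ) := by exact_mod_cast hn
  have hnR : (0:ℝ) < (n:ℝ) := by exact_mod_cast hn
  simp only [Finset.mem_Icc] at hk0
  set q := r / (n:ℤ) with hq
  set s := r % (n:ℤ) with hs
  have hmod : s + (n:ℤ) * q = r := Int.emod_add_mul_ediv r (n:ℤ)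
  have hs0 : 0 ≤ s := Int.emod_nonneg r hnz
  have hs1 : s < (n:ℤ) := Int.emod_lt_of_pos r hn0
  have hq0 : 0 ≤ q := Int.ediv_nonneg (by omega) (by omega)
  have hqnat : ((q.toNat : ℤ)) = q := Int.toNat_of_nonneg hq0
  have hmod' : s + q * (n:ℤ) = r := by rw [mul_comm q]; exact hmod
  have hpeel := sum_peel hper hsum q.toNat k0 s hs0
  rw [hqnat] at hpeel
  rw [show k0 + r = k0 + (q * (n:ℤ) + s) by omega, hpeel]
  -- now bound ∑_{Ioc k0 (k0+s)} x ≤ s/n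
  have hbound : ∑ j ∈ Ioc k0 (k0+s), x j ≤ (s:ℝ)/(n:ℝ) := by
    have hsplit : (∑ j ∈ Ioc (0:ℤ) k0, x j) + ∑ j ∈ Ioc k0 (k0+s), x j
        = ∑ j ∈ Ioc (0:ℤ) (k0+s), x j := sum_Ioc_cons x (by omega) (by omega)
    have hfm := fA_max_all hn hper hsum (Finset.mem_Icc.mpr hk0) hmax (k0+s) (by omega) (by omega)
    unfold fA at hfm
    rw [← hsplit] at hfm
    push_cast at hfm ⊢
    rw [add_div] at hfm
    linarith
  calc (q.toNat : ℝ) + ∑ j ∈ Ioc k0 (k0+s), x j ≤ (q:ℝ) + (s:ℝ)/(n:ℝ) := by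
        rw [show ((q.toNat:ℕ):ℝ) = ((q.toNat : ℤ) : ℝ) by norm_cast, hqnat]
        linarith
    _ = (r:ℝ)/(n:ℝ) := by
        have hc : ((q:ℝ) * (n:ℝ) + (s:ℝ)) = (r:ℝ) := by
          exact_mod_cast (by omega : q * (n:ℤ) + s = r)
        rw [← hc]
        field_simp

lemma F4 (hn : 1 ≤ n) (hper : ∀ i, x (i + (n:ℤ)) = x i)
    (hsum : ∑ j ∈ Ioc (0:ℤ) (n:ℤ), x j = 1)
    (hk0 : k0 ∈ Finset.Icc (0:ℤ) ((n:ℤ)-1))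
    (hmax : ∀ m ∈ Finset.Icc (0:ℤ) ((n:ℤ)-1), fA n x m ≤ fA n x k0)
    (d : ℤ) (hd1 : 1 ≤ d) (hd2 : d ≤ (n:ℤ) - 1) :
    (d:ℝ)/(n:ℝ) ≤ ∑ j ∈ Ioc (k0 - d) k0, x j := by
  have hnR : (0:ℝ) < (n:ℝ) := by exact_mod_cast hn
  simp only [Finset.mem_Icc] at hk0
  rcases le_or_gt 0 (k0 - d) with h | h
  · have hsplit : (∑ j ∈ Ioc (0:ℤ) (k0-d), x j) + ∑ j ∈ Ioc (k0-d) k0, x j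
        = ∑ j ∈ Ioc (0:ℤ) k0, x j := sum_Ioc_cons x h (by omega)
    have hfm := hmax (k0 - d) (Finset.mem_Icc.mpr ⟨h, by omega⟩)
    unfold fA at hfm
    rw [← hsplit] at hfm
    push_cast at hfm ⊢
    rw [sub_div] at hfm
    linarith
  · have e0 : ∑ j ∈ Ioc (k0-d) k0, x j = ∑ j ∈ Ioc (k0-d+(n:ℤ)) (k0+(n:ℤ)), x j :=
      (sum_Ioc_add_period hper (k0-d) k0).symm
    have hsplit : (∑ j ∈ Ioc (0:ℤ) (k0-d+(n:ℤ)), x j) + ∑ j ∈ Ioc (k0-d+(n:ℤ)) (k0+(n:ℤ)), x j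
        = ∑ j ∈ Ioc (0:ℤ) (k0+(n:ℤ)), x j := sum_Ioc_cons x (by omega) (by omega)
    have hfm := fA_max_all hn hper hsum (Finset.mem_Icc.mpr hk0) hmax (k0-d+(n:ℤ)) (by omega) (by omega)
    have hfp : fA n x (k0 + (n:ℤ)) = fA n x k0 := fA_per hn hper hsum k0 hk0.1
    have key : fA n x (k0-d+(n:ℤ)) ≤ fA n x (k0+(n:ℤ)) := by rw [hfp]; exact hfm
    unfold fA at key
    rw [← hsplit] at key
    rw [e0]
    push_cast at key ⊢
    rw [show ((k0:ℝ) - (d:ℝ) + (n:ℝ))/(n:ℝ) = (k0:ℝ)/(n:ℝ) - (d:ℝ)/(n:ℝ) + 1 by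
      field_simp, show ((k0:ℝ) + (n:ℝ))/(n:ℝ) = (k0:ℝ)/(n:ℝ) + 1 by field_simp] at key
    linarith
end NormA

section PartA
variable {n : ℕ} {x : ℤ → ℝ} {k0 : ℤ}

lemma F6 (hn : 1 ≤ n) (hper : ∀ i, x (i + (n:ℤ)) = x i)
    (hsum : ∑ j ∈ Ioc (0:ℤ) (n:ℤ), x j = 1)
    (hk0 : k0 ∈ Finset.Icc (0:ℤ) ((n:ℤ)-1))
    (hmax : ∀ m ∈ Finset.Icc (0:ℤ) ((n:ℤ)-1), fA n x m ≤ fA n x k0) :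
    mplus x k0 ≤ 1/(n:ℝ) := by
  apply mplus_le_of
  intro r hr
  have hr0 : (0:ℝ) < (r:ℝ) := by exact_mod_cast hr
  have h := F3 hn hper hsum hk0 hmax (r:ℤ) (by exact_mod_cast hr)
  rw [div_le_iff₀ hr0]
  rw [show ((r:ℤ):ℝ) = (r:ℝ) by norm_cast] at h
  calc ∑ j ∈ Ioc k0 (k0 + (r:ℤ)), x j ≤ (r:ℝ)/(n:ℝ) := h
    _ = 1/(n:ℝ) * r := by ring

lemma F5 (hn : 1 ≤ n) (hnn : ∀ i, 0 ≤ x i) (hper : ∀ i, x (i + (n:ℤ)) = x i)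
    (hsum : ∑ j ∈ Ioc (0:ℤ) (n:ℤ), x j = 1)
    (hk0 : k0 ∈ Finset.Icc (0:ℤ) ((n:ℤ)-1))
    (hmax : ∀ m ∈ Finset.Icc (0:ℤ) ((n:ℤ)-1), fA n x m ≤ fA n x k0)
    (y : ℤ → ℝ)
    (hy : ∀ t : ℤ, 1-(n:ℤ) ≤ t → t ≤ 0 → y t = x (t + k0))
    (i : ℤ) (hi1 : 1-(n:ℤ) ≤ i) (hi2 : i ≤ -1) :
    mplus x (i + k0) ≤ mNeg y i := by
  have hnR : (0:ℝ) < (n:ℝ) := by exact_mod_cast hn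
  have hd1 : (1:ℤ) ≤ -i := by omega
  have hsum_y : ∀ r : ℤ, 1 ≤ r → r ≤ -i →
      ∑ j ∈ Finset.Icc (i+1) (i+r), y j = ∑ j ∈ Ioc (i+k0) (i+k0+r), x j := by
    intro r h1 h2
    rw [IccIoc]
    have hshift : ∑ j ∈ Ioc (i+k0) (i+k0+r), x j = ∑ j ∈ Ioc i (i+r), x (j + k0) := by
      have h := sum_shiftIoc x i (i+r) k0
      rw [show i + r + k0 = i + k0 + r by ring] at h
      exact h
    rw [hshift]
    refine Finset.sum_congr rfl fun j hj => ?_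
    rw [Finset.mem_Ioc] at hj
    exact hy j (by omega) (by omega)
  have hbdd : BddAbove {a : ℝ | ∃ r : ℤ, 1 ≤ r ∧ r ≤ -i ∧
      a = (∑ j ∈ Finset.Icc (i + 1) (i + r), y j) / (r : ℝ)} := by
    refine ⟨∑ j ∈ Ioc (0:ℤ) (n:ℤ), x j, ?_⟩
    rintro a ⟨r, h1, h2, rfl⟩
    rw [hsum_y r h1 h2]
    have hr0 : (0:ℝ) < (r:ℝ) := by exact_mod_cast h1
    rw [div_le_iff₀ hr0]
    calc ∑ j ∈ Ioc (i+k0) (i+k0+r), x j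
        ≤ ∑ j ∈ Ioc (i+k0) (i+k0+r), (∑ j' ∈ Ioc (0:ℤ) (n:ℤ), x j') :=
          Finset.sum_le_sum fun j _ => x_le_sum hn hnn hper j
      _ = (∑ j' ∈ Ioc (0:ℤ) (n:ℤ), x j') * r := by
          rw [Finset.sum_const, Int.card_Ioc]
          have h : (i + k0 + r - (i + k0)).toNat = r.toNat := by omega
          rw [h, nsmul_eq_mul]
          rw [show ((r.toNat : ℕ) : ℝ) = ((r.toNat : ℤ) : ℝ) by norm_cast,
            Int.toNat_of_nonneg (by omega : (0:ℤ) ≤ r), mul_comm]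
  apply mplus_le_of
  intro rr hrr
  have hrrZ : (1:ℤ) ≤ (rr:ℤ) := by exact_mod_cast hrr
  rcases le_or_gt ((rr:ℕ):ℤ) (-i) with hc | hc
  · refine le_csSup hbdd ⟨((rr:ℕ):ℤ), hrrZ, hc, ?_⟩
    rw [hsum_y _ hrrZ hc]
    norm_cast
  · set d : ℤ := -i with hd
    set aa := (∑ j ∈ Ioc (i+k0) k0, x j)/(d:ℝ) with haa
    have hdR : (0:ℝ) < (d:ℝ) := by exact_mod_cast hd1
    have haaS : aa ∈ {a : ℝ | ∃ r : ℤ, 1 ≤ r ∧ r ≤ -i ∧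
        a = (∑ j ∈ Finset.Icc (i + 1) (i + r), y j) / (r : ℝ)} := by
      refine ⟨d, hd1, le_of_eq hd, ?_⟩
      rw [hsum_y d hd1 (by omega)]
      rw [show i + k0 + d = k0 by omega]
    have haan : 1/(n:ℝ) ≤ aa := by
      have h4 := F4 hn hper hsum hk0 hmax d hd1 (by omega)
      rw [show k0 - d = i + k0 by omega] at h4
      rw [haa, div_le_div_iff₀ hnR hdR]
      rw [div_le_iff₀ hnR] at h4
      linarith
    have hsplit : ∑ j ∈ Ioc (i+k0) (i+k0+(rr:ℤ)), x j
        = (∑ j ∈ Ioc (i+k0) k0, x j) + ∑ j ∈ Ioc k0 (i+k0+(rr:ℤ)), x j :=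
      (sum_Ioc_cons x (by omega) (by omega)).symm
    have h2 : ∑ j ∈ Ioc k0 (i+k0+(rr:ℤ)), x j ≤ ((rr:ℝ) - d)/(n:ℝ) := by
      have h3 := F3 hn hper hsum hk0 hmax (i + (rr:ℤ)) (by omega)
      rw [show k0 + (i + (rr:ℤ)) = i + k0 + (rr:ℤ) by ring] at h3
      have hc2 : ((i + (rr:ℕ) : ℤ):ℝ) = (rr:ℝ) - (d:ℝ) := by rw [hd]; push_cast; ring
      rw [hc2] at h3
      exact h3
    have h2' : ∑ j ∈ Ioc k0 (i+k0+(rr:ℤ)), x j ≤ ((rr:ℝ) - d) * aa := by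
      refine le_trans h2 ?_
      rw [div_eq_mul_one_div]
      exact mul_le_mul_of_nonneg_left haan (by exact_mod_cast by omega : (0:ℝ) ≤ (rr:ℝ) - d)
    have h1 : ∑ j ∈ Ioc (i+k0) k0, x j = (d:ℝ) * aa := by
      rw [haa]; field_simp
    refine le_trans ?_ (le_csSup hbdd haaS)
    rw [hsplit, h1]
    have hrr0 : (0:ℝ) < (rr:ℝ) := by exact_mod_cast hrr
    rw [div_le_iff₀ hrr0]
    calc (d:ℝ) * aa + ∑ j ∈ Ioc k0 (i+k0+(rr:ℤ)), x j
        ≤ (d:ℝ) * aa + ((rr:ℝ) - d) * aa := by linarith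
      _ = aa * rr := by ring
end PartA

section Assembly

lemma tsum_subtype_eq (f : ℤ → ℝ≥0∞) (K : Finset ℤ) (hK2 : ∀ i ∈ K, i ≤ -1)
    (hK : ∀ i : ℤ, i ≤ -1 → i ∉ K → f i = 0) :
    ∑' i : {z : ℤ // z ≤ -1}, f i = ∑ i ∈ K, f i := by
  have h0 : ∑' i : {z : ℤ // z ≤ -1}, f ↑i = ∑' i : ℤ, Set.indicator {z : ℤ | z ≤ -1} f i :=
    tsum_subtype _ f
  rw [h0, tsum_eq_sum (s := K) ?h]
  · exact Finset.sum_congr rfl fun i hi =>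
      Set.indicator_of_mem (show i ∈ {z : ℤ | z ≤ -1} from hK2 i hi) f
  · intro i hi
    by_cases h : i ≤ -1
    · rw [Set.indicator_of_mem (show i ∈ {z : ℤ | z ≤ -1} from h) f]; exact hK i h hi
    · exact Set.indicator_of_notMem (show i ∉ {z : ℤ | z ≤ -1} from h) f

lemma sum_le_tsum_subtype (f : ℤ → ℝ≥0∞) (K : Finset ℤ) (hK : ∀ i ∈ K, i ≤ -1) :
    ∑ i ∈ K, f i ≤ ∑' i : {z : ℤ // z ≤ -1}, f i := by
  have h0 : ∑' i : {z : ℤ // z ≤ -1}, f ↑i = ∑' i : ℤ, Set.indicator {z : ℤ | z ≤ -1} f i :=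
    tsum_subtype _ f
  rw [h0]
  refine le_trans (le_of_eq ?_) (ENNReal.sum_le_tsum K)
  exact Finset.sum_congr rfl fun i hi =>
    (Set.indicator_of_mem (show i ∈ {z : ℤ | z ≤ -1} from hK i hi) f).symm

lemma Ioc_neg_one_zero : Finset.Ioc (-1:ℤ) 0 = {0} := by
  ext t; simp only [Finset.mem_Ioc, Finset.mem_singleton]; omega

lemma partA (n : ℕ) (hn : 1 ≤ n) (x : ℤ → ℝ) (hnn : ∀ i, 0 ≤ x i)
    (hper : ∀ i, x (i + (n:ℤ)) = x i) (hsum : ∑ j ∈ Ioc (0:ℤ) (n:ℤ), x j = 1) :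
    ∃ y ∈ Delta n, Tval y (1/(n:ℝ)) ≤ SmaxE n x := by
  have hnZ : (1:ℤ) ≤ (n:ℤ) := by exact_mod_cast hn
  obtain ⟨k0, hk0, hmax⟩ := Finset.exists_max_image (Finset.Icc (0:ℤ) ((n:ℤ)-1)) (fA n x)
    ⟨0, Finset.mem_Icc.mpr ⟨le_rfl, by omega⟩⟩
  have hk0' := Finset.mem_Icc.mp hk0
  set y : ℤ → ℝ := fun t => if 1-(n:ℤ) ≤ t ∧ t ≤ 0 then x (t + k0) else 0 with hydef
  have hy : ∀ t : ℤ, 1-(n:ℤ) ≤ t → t ≤ 0 → y t = x (t + k0) := by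
    intro t h1 h2; simp only [hydef]; rw [if_pos ⟨h1, h2⟩]
  have hy0 : ∀ t : ℤ, (t < 1-(n:ℤ) ∨ 0 < t) → y t = 0 := by
    intro t h; simp only [hydef]; rw [if_neg (by omega)]
  have hynn : ∀ t, 0 ≤ y t := by
    intro t; simp only [hydef]; split_ifs with h
    · exact hnn _
    · exact le_rfl
  have hwin : Finset.Icc (1-(n:ℤ)) 0 = Finset.Ioc (-(n:ℤ)) 0 := by
    rw [show 1-(n:ℤ) = -(n:ℤ)+1 by ring, IccIoc]
  have hysum : ∑ i ∈ Finset.Icc (1 - (n:ℤ)) 0, y i = 1 := by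
    rw [hwin]
    have he : ∑ i ∈ Finset.Ioc (-(n:ℤ)) 0, y i = ∑ i ∈ Finset.Ioc (-(n:ℤ)) 0, x (i + k0) := by
      refine Finset.sum_congr rfl fun t ht => ?_
      rw [Finset.mem_Ioc] at ht
      exact hy t (by omega) ht.2
    rw [he]
    have hs := sum_shiftIoc x (-(n:ℤ)) 0 k0
    rw [← hs]
    have hp := periodic_sum_Ioc n x hper (k0 - (n:ℤ))
    rw [show k0 - (n:ℤ) + (n:ℤ) = k0 by ring] at hp
    rw [show -(n:ℤ) + k0 = k0 - (n:ℤ) by ring, show (0:ℤ) + k0 = k0 by ring, hp, hsum]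
  refine ⟨y, ⟨hynn, fun i hi => hy0 i (by omega), fun i hi => hy0 i (by omega), hysum⟩, ?_⟩
  -- now the inequality
  set g : ℤ → ℝ≥0∞ := fun i => ENNReal.ofReal (x i) / ENNReal.ofReal (mplus x i) with hg
  have hgper : ∀ i, g (i + (n:ℤ)) = g i := by
    intro i; simp only [hg]; rw [hper, mplus_periodic hper]
  have hSmax : SmaxE n x = (∑ t ∈ Ioc (-(n:ℤ)) (-1), g (t + k0)) + g (0 + k0) := by
    unfold SmaxE
    have h1 : Finset.Icc (1:ℤ) (n:ℤ) = Finset.Ioc 0 (n:ℤ) := by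
      rw [show (1:ℤ) = 0+1 by ring, IccIoc]
    rw [h1]
    have h2 := periodic_sum_Ioc n g hgper (k0 - (n:ℤ))
    rw [show k0 - (n:ℤ) + (n:ℤ) = k0 by ring] at h2
    have h3 := sum_shiftIoc g (-(n:ℤ)) 0 k0
    rw [show -(n:ℤ) + k0 = k0 - (n:ℤ) by ring, show (0:ℤ) + k0 = k0 by ring] at h3
    have h4 := sum_Ioc_cons (fun t => g (t + k0)) (by omega : -(n:ℤ) ≤ -1) (by omega : (-1:ℤ) ≤ 0)
    rw [Ioc_neg_one_zero, Finset.sum_singleton] at h4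
    show ∑ i ∈ Finset.Ioc (0:ℤ) (n:ℤ), g i = _
    rw [← h2, h3, ← h4]
  have htsum : (∑' i : {z : ℤ // z ≤ -1}, ENNReal.ofReal (y i) / ENNReal.ofReal (mNeg y i))
      = ∑ j ∈ Finset.Ioc (-(n:ℤ)) (-1), ENNReal.ofReal (y j) / ENNReal.ofReal (mNeg y j) := by
    refine tsum_subtype_eq (fun i => ENNReal.ofReal (y i) / ENNReal.ofReal (mNeg y i))
      (Finset.Ioc (-(n:ℤ)) (-1)) (fun i hi => (Finset.mem_Ioc.mp hi).2) ?_
    intro i h1 h2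
    rw [Finset.mem_Ioc] at h2
    have hyi : y i = 0 := hy0 i (by omega)
    simp only [hyi, ENNReal.ofReal_zero, ENNReal.zero_div]
  show (∑' i : {z : ℤ // z ≤ -1}, ENNReal.ofReal (y i) / ENNReal.ofReal (mNeg y i))
      + ENNReal.ofReal (y 0) / ENNReal.ofReal (1/(n:ℝ)) ≤ SmaxE n x
  rw [htsum, hSmax]
  refine add_le_add ?_ ?_
  · refine Finset.sum_le_sum fun j hj => ?_
    rw [Finset.mem_Ioc] at hj
    rw [hy j (by omega) (by omega)]
    simp only [hg]
    exact ENNReal.div_le_div le_rfl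
      (ENNReal.ofReal_le_ofReal (F5 hn hnn hper hsum hk0 hmax y hy j (by omega) (by omega)))
  · rw [hy 0 (by omega) le_rfl, show (0:ℤ) + k0 = k0 by ring]
    simp only [hg]
    exact ENNReal.div_le_div le_rfl
      (ENNReal.ofReal_le_ofReal (F6 hn hper hsum hk0 hmax))
end Assembly

section PartB

lemma partB (n : ℕ) (hn : 1 ≤ n) (N : ℕ) (y : ℤ → ℝ) (hy : y ∈ Delta N) :
    ∃ x : ℤ → ℝ, (∀ i, 0 ≤ x i) ∧ (∀ i, x (i + (n:ℤ)) = x i) ∧ (∃ i, x i ≠ 0) ∧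
      SmaxE n x ≤ Tval y (1/(n:ℝ)) := by
  obtain ⟨hynn, hyneg, hypos, hysum⟩ := hy
  have hnZ : (1:ℤ) ≤ (n:ℤ) := by exact_mod_cast hn
  rcases Nat.eq_zero_or_pos N with h0 | hN
  · exfalso
    subst h0
    norm_num at hysum
  have hNZ : (1:ℤ) ≤ (N:ℤ) := by exact_mod_cast hN
  set W := Finset.Icc (1-(N:ℤ)) 0 with hW
  set x : ℤ → ℝ := fun i => ∑ j ∈ W, if (n:ℤ) ∣ (i - j) then y j else 0 with hx
  have hite_nonneg : ∀ (i j : ℤ), 0 ≤ (if (n:ℤ) ∣ (i - j) then y j else 0) := by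
    intro i j; split_ifs
    · exact hynn j
    · exact le_rfl
  have hxnn : ∀ i, 0 ≤ x i := fun i => Finset.sum_nonneg fun j _ => hite_nonneg i j
  have hxper : ∀ i, x (i + (n:ℤ)) = x i := by
    intro i
    simp only [hx]
    refine Finset.sum_congr rfl fun j _ => ?_
    have hiff : ((n:ℤ) ∣ (i + (n:ℤ) - j)) ↔ ((n:ℤ) ∣ (i - j)) := by
      constructor
      · intro h
        have h2 := dvd_sub h (dvd_refl (n:ℤ))
        rwa [show i + (n:ℤ) - j - (n:ℤ) = i - j by ring] at h2
      · intro h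
        rw [show i + (n:ℤ) - j = (i - j) + (n:ℤ) by ring]
        exact dvd_add h (dvd_refl _)
    by_cases hdd : (n:ℤ) ∣ (i - j)
    · rw [if_pos (hiff.mpr hdd), if_pos hdd]
    · rw [if_neg (fun hc => hdd (hiff.mp hc)), if_neg hdd]
  have hyout : ∀ j : ℤ, j ∉ W → y j = 0 := by
    intro j hj
    rw [hW, Finset.mem_Icc] at hj
    push_neg at hj
    rcases le_or_gt j 0 with h | h
    · exact hyneg j (by omega : j ≤ -(N:ℤ))
    · exact hypos j h
  have hkey : ∀ t t' : ℤ, (n:ℤ) ∣ (t' - t) → y t ≤ x t' := by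
    intro t t' hdvd
    by_cases hm : t ∈ W
    · have hle := Finset.single_le_sum (f := fun j => if (n:ℤ) ∣ (t' - j) then y j else 0)
        (fun j _ => hite_nonneg t' j) hm
      beta_reduce at hle
      rw [if_pos hdvd] at hle
      exact hle
    · rw [hyout t hm]
      exact hxnn t'
  have hIccIoc1n : Finset.Icc (1:ℤ) (n:ℤ) = Finset.Ioc 0 (n:ℤ) := by
    rw [show (1:ℤ) = 0+1 by ring, IccIoc]
  have hinner : ∀ (j : ℤ) (c : ℝ≥0∞),
      ∑ i ∈ Finset.Ioc (0:ℤ) (n:ℤ), (if (n:ℤ) ∣ (i - j) then c else 0) = c := by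
    intro j c
    obtain ⟨hmem, hdvd⟩ := rep_exists n hn 0 j
    rw [show (0:ℤ) + (n:ℤ) = (n:ℤ) by ring] at hmem
    have h := Finset.sum_eq_single_of_mem (f := fun i => if (n:ℤ) ∣ (i - j) then c else 0)
      _ hmem ?hz
    · rw [h]; beta_reduce; rw [if_pos hdvd]
    case hz =>
      intro b hb hne
      beta_reduce
      rw [if_neg]
      intro hd
      apply hne
      refine int_eq_of_dvd_of_Ioc (n := (n:ℤ)) (k := 0) ?_ (Finset.mem_Ioc.mp hb).1
        (by simpa using (Finset.mem_Ioc.mp hb).2) (Finset.mem_Ioc.mp hmem).1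
        (by simpa using (Finset.mem_Ioc.mp hmem).2)
      have he : b - (j + (n:ℤ) * ((0-j)/(n:ℤ)) + (n:ℤ)) = (b - j) - ((j + (n:ℤ) * ((0-j)/(n:ℤ)) + (n:ℤ)) - j) := by
        ring
      rw [he]
      exact dvd_sub hd hdvd
  have hsumx : ∑ i ∈ Finset.Ioc (0:ℤ) (n:ℤ), x i = 1 := by
    simp only [hx]
    rw [Finset.sum_comm]
    have hinnerR : ∀ (j : ℤ),
        ∑ i ∈ Finset.Ioc (0:ℤ) (n:ℤ), (if (n:ℤ) ∣ (i - j) then y j else 0) = y j := by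
      intro j
      obtain ⟨hmem, hdvd⟩ := rep_exists n hn 0 j
      rw [show (0:ℤ) + (n:ℤ) = (n:ℤ) by ring] at hmem
      have h := Finset.sum_eq_single_of_mem (f := fun i => if (n:ℤ) ∣ (i - j) then y j else 0)
        _ hmem ?hz
      · rw [h]; beta_reduce; rw [if_pos hdvd]
      case hz =>
        intro b hb hne
        beta_reduce
        rw [if_neg]
        intro hd
        apply hne
        refine int_eq_of_dvd_of_Ioc (n := (n:ℤ)) (k := 0) ?_ (Finset.mem_Ioc.mp hb).1
          (by simpa using (Finset.mem_Ioc.mp hb).2) (Finset.mem_Ioc.mp hmem).1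
          (by simpa using (Finset.mem_Ioc.mp hmem).2)
        have he : b - (j + (n:ℤ) * ((0-j)/(n:ℤ)) + (n:ℤ)) = (b - j) - ((j + (n:ℤ) * ((0-j)/(n:ℤ)) + (n:ℤ)) - j) := by
          ring
        rw [he]
        exact dvd_sub hd hdvd
    rw [Finset.sum_congr rfl (fun j _ => hinnerR j)]
    exact hysum
  have hxne : ∃ i, x i ≠ 0 := by
    by_contra hc
    push_neg at hc
    rw [Finset.sum_congr rfl (fun i _ => hc i)] at hsumx
    simp at hsumx
  -- key comparison lemmas
  have hKB2 : ∀ i : ℤ, 1/(n:ℝ) ≤ mplus x i := fun i => mplus_ge_inv_n hn hxnn hxper hsumx i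
  have hKB1 : ∀ (j i : ℤ), j ≤ -1 → (n:ℤ) ∣ (i - j) → mNeg y j ≤ mplus x i := by
    intro j i hj hdvd
    have hne : {a : ℝ | ∃ r : ℤ, 1 ≤ r ∧ r ≤ -j ∧
        a = (∑ t ∈ Finset.Icc (j + 1) (j + r), y t) / (r : ℝ)}.Nonempty :=
      ⟨_, 1, le_rfl, by omega, rfl⟩
    refine csSup_le hne ?_
    rintro a ⟨r, h1, h2, rfl⟩
    have hnum : ∑ t ∈ Finset.Icc (j+1) (j+r), y t ≤ ∑ t ∈ Finset.Ioc i (i + r), x t := by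
      rw [IccIoc]
      have hshift := sum_shiftIoc x j (j+r) (i-j)
      rw [show j + (i-j) = i by ring, show j + r + (i-j) = i + r by ring] at hshift
      rw [hshift]
      refine Finset.sum_le_sum fun t _ => ?_
      exact hkey t (t + (i-j)) (by rw [show t + (i-j) - t = i - j by ring]; exact hdvd)
    have hr0 : (0:ℝ) < (r:ℝ) := by exact_mod_cast h1
    have havg := avg_le_mplus hn hxnn hxper i r.toNat (by omega)
    rw [show ((r.toNat : ℕ) : ℤ) = r by omega] at havg
    refine le_trans ?_ havg
    have hc : ((r.toNat : ℕ) : ℝ) = (r : ℝ) := by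
      rw [show ((r.toNat : ℕ) : ℝ) = ((r.toNat : ℤ) : ℝ) by norm_cast]
      congr 1
      omega
    rw [hc]
    gcongr
  refine ⟨x, hxnn, hxper, hxne, ?_⟩
  set Tj : ℤ → ℝ≥0∞ := fun j => ENNReal.ofReal (y j) /
    (if j = 0 then ENNReal.ofReal (1/(n:ℝ)) else ENNReal.ofReal (mNeg y j)) with hTj
  have claim1 : SmaxE n x ≤ ∑ j ∈ W, Tj j := by
    unfold SmaxE
    rw [hIccIoc1n]
    have e1 : ∀ i : ℤ, ENNReal.ofReal (x i) / ENNReal.ofReal (mplus x i)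
        = ∑ j ∈ W, ENNReal.ofReal (if (n:ℤ) ∣ (i - j) then y j else 0)
            * (ENNReal.ofReal (mplus x i))⁻¹ := by
      intro i
      rw [div_eq_mul_inv, show x i = ∑ j ∈ W, (if (n:ℤ) ∣ (i - j) then y j else 0) from rfl,
        ENNReal.ofReal_sum_of_nonneg (fun j _ => hite_nonneg i j), Finset.sum_mul]
    rw [Finset.sum_congr rfl (fun i _ => e1 i), Finset.sum_comm]
    refine Finset.sum_le_sum fun j hj => ?_
    have hstep : ∀ i ∈ Finset.Ioc (0:ℤ) (n:ℤ),
        ENNReal.ofReal (if (n:ℤ) ∣ (i - j) then y j else 0) * (ENNReal.ofReal (mplus x i))⁻¹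
          ≤ (if (n:ℤ) ∣ (i - j) then Tj j else 0) := by
      intro i _
      by_cases hdd : (n:ℤ) ∣ (i - j)
      · rw [if_pos hdd, if_pos hdd]
        simp only [hTj]
        rw [div_eq_mul_inv]
        refine mul_le_mul_right ?_ _
        rw [ENNReal.inv_le_inv]
        by_cases hj0 : j = 0
        · rw [if_pos hj0]
          exact ENNReal.ofReal_le_ofReal (hKB2 i)
        · rw [if_neg hj0]
          have hjW := hj
          rw [hW, Finset.mem_Icc] at hjW
          have hjle : j ≤ -1 := by omega
          exact ENNReal.ofReal_le_ofReal (hKB1 j i hjle hdd)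
      · rw [if_neg hdd, if_neg hdd]
        simp
    refine le_trans (Finset.sum_le_sum hstep) (le_of_eq (hinner j (Tj j)))
  have claim2 : ∑ j ∈ W, Tj j ≤ Tval y (1/(n:ℝ)) := by
    have hWIoc : W = Finset.Ioc (-(N:ℤ)) 0 := by
      rw [hW, show 1-(N:ℤ) = -(N:ℤ)+1 by ring, IccIoc]
    have hsplit := sum_Ioc_cons Tj (by omega : -(N:ℤ) ≤ -1) (by omega : (-1:ℤ) ≤ 0)
    rw [Ioc_neg_one_zero, Finset.sum_singleton] at hsplit
    rw [hWIoc, ← hsplit]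
    unfold Tval
    refine add_le_add ?_ ?_
    · have he : ∀ j ∈ Finset.Ioc (-(N:ℤ)) (-1),
          Tj j = ENNReal.ofReal (y j) / ENNReal.ofReal (mNeg y j) := by
        intro j hj
        have hj0 : j ≠ 0 := by have := Finset.mem_Ioc.mp hj; omega
        simp only [hTj]
        rw [if_neg hj0]
      rw [Finset.sum_congr rfl he]
      exact sum_le_tsum_subtype _ _ (fun i hi => (Finset.mem_Ioc.mp hi).2)
    · simp only [hTj]
      simp
  exact claim1.trans claim2
end PartB

section Final

lemma ofReal_div_div_le (c m1 m2 s : ℝ) (hc : 0 ≤ c) (hs : 0 < s) (h : m2 ≤ s * m1) :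
    ENNReal.ofReal (c / s) / ENNReal.ofReal m1 ≤ ENNReal.ofReal c / ENNReal.ofReal m2 := by
  refine le_trans ?_ (ENNReal.div_le_div le_rfl (ENNReal.ofReal_le_ofReal h))
  rw [ENNReal.ofReal_mul hs.le, ENNReal.ofReal_div_of_pos hs]
  rw [div_eq_mul_inv, div_eq_mul_inv, div_eq_mul_inv,
    ENNReal.mul_inv (Or.inl (by simp [hs])) (Or.inl (by simp)), ← mul_assoc]

/-- `Φ_n = T_n*(1/n) = T^inf(1/n)`: the cyclic minimum value equals the
non-cyclic minimum value with `N = n`, `p = 1/n`, and also the limit value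
`T^inf(1/n) = lim_{N→∞} T_N*(1/n)`. -/
theorem Phi_eq_Tstar_eq_Tinf (n : ℕ) (hn : 1 ≤ n) :
    PhiE n = Tstar n (1 / (n : ℝ)) ∧
    Tendsto (fun N : ℕ => Tstar N (1 / (n : ℝ))) atTop (𝓝 (PhiE n)) := by
  have hnR : (0:ℝ) < (n:ℝ) := by exact_mod_cast hn
  have hTleP : Tstar n (1/(n:ℝ)) ≤ PhiE n := by
    rw [PhiE]
    refine le_sInf ?_
    rintro t ⟨x, hnn, hper, ⟨i0, hi0⟩, rfl⟩
    set s := ∑ j ∈ Ioc (0:ℤ) (n:ℤ), x j with hs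
    have hspos : 0 < s := by
      have h1 : 0 < x i0 := lt_of_le_of_ne (hnn i0) (Ne.symm hi0)
      exact lt_of_lt_of_le h1 (x_le_sum hn hnn hper i0)
    set x' : ℤ → ℝ := fun t => x t / s with hx'
    have hnn' : ∀ i, 0 ≤ x' i := fun i => div_nonneg (hnn i) hspos.le
    have hper' : ∀ i, x' (i + (n:ℤ)) = x' i := fun i => by simp only [hx']; rw [hper]
    have hsum' : ∑ j ∈ Ioc (0:ℤ) (n:ℤ), x' j = 1 := by
      simp only [hx']
      rw [← Finset.sum_div, ← hs, div_self hspos.ne']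
    have hcmp : ∀ i : ℤ, mplus x i ≤ s * mplus x' i := by
      intro i
      apply mplus_le_of
      intro r hr
      have hr0 : (0:ℝ) < (r:ℝ) := by exact_mod_cast hr
      have h1 : (∑ j ∈ Ioc i (i + (r:ℤ)), x j) / (r:ℝ)
          = s * ((∑ j ∈ Ioc i (i + (r:ℤ)), x' j) / (r:ℝ)) := by
        simp only [hx']
        rw [← Finset.sum_div]
        field_simp
      rw [h1]
      exact mul_le_mul_of_nonneg_left (avg_le_mplus hn hnn' hper' i r hr) hspos.le
    have hSle : SmaxE n x' ≤ SmaxE n x := by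
      unfold SmaxE
      refine Finset.sum_le_sum fun i _ => ?_
      exact ofReal_div_div_le (x i) (mplus x' i) (mplus x i) s (hnn i) hspos (hcmp i)
    obtain ⟨y, hyD, hyle⟩ := partA n hn x' hnn' hper' hsum'
    exact le_trans (sInf_le ⟨y, hyD, rfl⟩) (le_trans hyle hSle)
  have hPleT : ∀ N : ℕ, PhiE n ≤ Tstar N (1/(n:ℝ)) := by
    intro N
    refine le_sInf ?_
    rintro t ⟨y, hyD, rfl⟩
    obtain ⟨x, h1, h2, h3, h4⟩ := partB n hn N y hyD
    exact le_trans (sInf_le ⟨x, h1, h2, h3, rfl⟩) h4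
  have heq : PhiE n = Tstar n (1/(n:ℝ)) := le_antisymm (hPleT n) hTleP
  refine ⟨heq, ?_⟩
  have hconst : ∀ N : ℕ, n ≤ N → Tstar N (1/(n:ℝ)) = PhiE n := by
    intro N hN
    have hNZ : (n:ℤ) ≤ (N:ℤ) := by exact_mod_cast hN
    have hnZ : (1:ℤ) ≤ (n:ℤ) := by exact_mod_cast hn
    refine le_antisymm ?_ (hPleT N)
    refine le_trans ?_ hTleP
    apply sInf_le_sInf
    rintro t ⟨y, ⟨ha, hb, hc, hd⟩, rfl⟩
    refine ⟨y, ⟨ha, fun i hi => hb i (by omega : i ≤ -(n:ℤ)), hc, ?_⟩, rfl⟩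
    have hsp := sum_Ioc_cons y (by omega : -(N:ℤ) ≤ -(n:ℤ)) (by omega : -(n:ℤ) ≤ 0)
    have hz : ∑ i ∈ Ioc (-(N:ℤ)) (-(n:ℤ)), y i = 0 :=
      Finset.sum_eq_zero fun i hi => hb i (Finset.mem_Ioc.mp hi).2
    have hIN : Finset.Icc (1-(N:ℤ)) 0 = Finset.Ioc (-(N:ℤ)) 0 := by
      rw [show 1-(N:ℤ) = -(N:ℤ)+1 by ring, IccIoc]
    have hIn : Finset.Icc (1-(n:ℤ)) 0 = Finset.Ioc (-(n:ℤ)) 0 := by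
      rw [show 1-(n:ℤ) = -(n:ℤ)+1 by ring, IccIoc]
    rw [hIn] at hd
    rw [hIN, ← hsp, hz, zero_add]
    exact hd
  have hev : (fun N : ℕ => Tstar N (1/(n:ℝ))) =ᶠ[atTop] fun _ => PhiE n :=
    eventually_atTop.mpr ⟨n, fun N hN => hconst N hN⟩
  exact Filter.Tendsto.congr' hev.symm tendsto_const_nhds
end Final
end

section
/- For every N ≥ 1 and p > 0, the infimum T_N*(p) is attained: there exists x^(N) ∈ Δ_N such that T(x^(N), p) = min_{x∈Δ_N} T(x,p). -/
open Finset Filter Topology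
open scoped ENNReal

section Aux

open ENNReal

/-- Lower semicontinuity of `x ↦ ofReal (g x) / ofReal (h x)` for continuous `g, h`. -/
lemma lsc_ofReal_div {α : Type*} [TopologicalSpace α] {g h : α → ℝ}
    (hg : Continuous g) (hh : Continuous h) :
    LowerSemicontinuous fun z => ENNReal.ofReal (g z) / ENNReal.ofReal (h z) := by
  intro x
  by_cases H : g x ≤ 0 ∧ h x ≤ 0
  · have hfx : ENNReal.ofReal (g x) / ENNReal.ofReal (h x) = 0 := by
      rw [ENNReal.ofReal_eq_zero.2 H.1, ENNReal.zero_div]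
    intro y hy
    simp only [hfx] at hy
    exact absurd hy (by simp)
  · push_neg at H
    have hcont : ContinuousAt (fun z => ENNReal.ofReal (g z) / ENNReal.ofReal (h z)) x := by
      refine ENNReal.Tendsto.div
        ((ENNReal.continuous_ofReal.tendsto _).comp hg.continuousAt) ?_
        ((ENNReal.continuous_ofReal.tendsto _).comp hh.continuousAt) ?_
      · rcases le_or_gt (g x) 0 with hgx | hgx
        · exact Or.inr (by simpa [ENNReal.ofReal_eq_zero, not_le] using H hgx)
        · exact Or.inl (by simp [ENNReal.ofReal_eq_zero, not_le, hgx])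
      · exact Or.inl ENNReal.ofReal_ne_top
    exact hcont.lowerSemicontinuousAt

/-- `mNeg x i` as a finite `sup'` for `i ≤ -1`. -/
lemma mNeg_eq_sup' (x : ℤ → ℝ) (i : ℤ) (hi : i ≤ -1) :
    mNeg x i = (Finset.Icc (1 : ℤ) (-i)).sup' (by simp; omega)
      (fun r => (∑ j ∈ Finset.Icc (i + 1) (i + r), x j) / (r : ℝ)) := by
  rw [Finset.sup'_eq_csSup_image]
  unfold mNeg
  congr 1
  ext a
  simp only [Set.mem_setOf_eq, Set.mem_image, Finset.coe_Icc, Set.mem_Icc]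
  constructor
  · rintro ⟨r, h1, h2, rfl⟩; exact ⟨r, ⟨h1, h2⟩, rfl⟩
  · rintro ⟨r, ⟨h1, h2⟩, rfl⟩; exact ⟨r, h1, h2, rfl⟩

lemma continuous_mNeg (i : ℤ) (hi : i ≤ -1) : Continuous fun x : ℤ → ℝ => mNeg x i := by
  have : (fun x : ℤ → ℝ => mNeg x i) = fun x =>
      (Finset.Icc (1 : ℤ) (-i)).sup' (by simp; omega)
        (fun r => (∑ j ∈ Finset.Icc (i + 1) (i + r), x j) / (r : ℝ)) := by
    funext x; exact mNeg_eq_sup' x i hi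
  rw [this]
  refine Continuous.finset_sup'_apply _ fun r _ => ?_
  exact (continuous_finset_sum _ fun j _ => continuous_apply j).div_const _

lemma lsc_Tval (p : ℝ) : LowerSemicontinuous fun x : ℤ → ℝ => Tval x p := by
  unfold Tval
  refine LowerSemicontinuous.add ?_ ?_
  · refine lowerSemicontinuous_tsum fun i => ?_
    exact lsc_ofReal_div (continuous_apply (i.1 : ℤ)) (continuous_mNeg i.1 i.2)
  · exact lsc_ofReal_div (continuous_apply 0) continuous_const

lemma isClosed_Delta (N : ℕ) : IsClosed (Delta N) := by
  have h1 : IsClosed {x : ℤ → ℝ | ∀ i, 0 ≤ x i} := by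
    simp only [Set.setOf_forall]
    exact isClosed_iInter fun i => isClosed_le continuous_const (continuous_apply i)
  have h2 : IsClosed {x : ℤ → ℝ | ∀ i : ℤ, i ≤ -(N : ℤ) → x i = 0} := by
    simp only [Set.setOf_forall]
    exact isClosed_iInter fun i => isClosed_iInter fun _ =>
      isClosed_eq (continuous_apply i) continuous_const
  have h3 : IsClosed {x : ℤ → ℝ | ∀ i : ℤ, 0 < i → x i = 0} := by
    simp only [Set.setOf_forall]
    exact isClosed_iInter fun i => isClosed_iInter fun _ =>
      isClosed_eq (continuous_apply i) continuous_const
  have h4 : IsClosed {x : ℤ → ℝ | ∑ i ∈ Finset.Icc (1 - (N : ℤ)) 0, x i = 1} :=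
    isClosed_eq (continuous_finset_sum _ fun j _ => continuous_apply j) continuous_const
  have : Delta N = {x : ℤ → ℝ | ∀ i, 0 ≤ x i} ∩ {x | ∀ i : ℤ, i ≤ -(N : ℤ) → x i = 0} ∩
      {x | ∀ i : ℤ, 0 < i → x i = 0} ∩
      {x | ∑ i ∈ Finset.Icc (1 - (N : ℤ)) 0, x i = 1} := by
    ext x; simp [Delta, Set.mem_setOf_eq, and_assoc]
  rw [this]
  exact ((h1.inter h2).inter h3).inter h4

lemma isCompact_Delta (N : ℕ) : IsCompact (Delta N) := by
  have hK : IsCompact (Set.pi Set.univ fun _ : ℤ => Set.Icc (0 : ℝ) 1) :=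
    isCompact_univ_pi fun _ => isCompact_Icc
  refine hK.of_isClosed_subset (isClosed_Delta N) ?_
  rintro x ⟨hx0, hxneg, hxpos, hxsum⟩ i -
  refine ⟨hx0 i, ?_⟩
  by_cases hi : i ∈ Finset.Icc (1 - (N : ℤ)) 0
  · calc x i ≤ ∑ j ∈ Finset.Icc (1 - (N : ℤ)) 0, x j :=
        Finset.single_le_sum (fun j _ => hx0 j) hi
    _ = 1 := hxsum
  · simp only [Finset.mem_Icc, not_and, not_le] at hi
    rcases le_or_gt i 0 with h0 | h0
    · have : i ≤ -(N : ℤ) := by omega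
      simp [hxneg i this]
    · simp [hxpos i h0]

/-- A lower semicontinuous `ℝ≥0∞`-valued function attains its minimum on a
nonempty compact closed set. -/
lemma exists_min_of_lsc {α : Type*} [TopologicalSpace α] {s : Set α} (hs : IsCompact s)
    (hscl : IsClosed s) (hne : s.Nonempty) {f : α → ℝ≥0∞} (hf : LowerSemicontinuous f) :
    ∃ x ∈ s, ∀ y ∈ s, f x ≤ f y := by
  haveI : Nonempty s := hne.to_subtype
  set t : s → Set α := fun y => s ∩ {x | f x ≤ f y.1} with ht
  have htd : Directed (· ⊇ ·) t := by
    intro a b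
    rcases le_total (f a.1) (f b.1) with h | h
    · exact ⟨a, subset_rfl, fun x hx => ⟨hx.1, le_trans hx.2 h⟩⟩
    · exact ⟨b, fun x hx => ⟨hx.1, le_trans hx.2 h⟩, subset_rfl⟩
  have htn : ∀ y, (t y).Nonempty := fun y => ⟨y.1, y.2, show f y.1 ≤ f y.1 from le_rfl⟩
  have htcl : ∀ y, IsClosed (t y) := fun y => hscl.inter (hf.isClosed_preimage (f y.1))
  have htc : ∀ y, IsCompact (t y) := fun y => hs.inter_right (hf.isClosed_preimage (f y.1))
  obtain ⟨x, hx⟩ := IsCompact.nonempty_iInter_of_directed_nonempty_isCompact_isClosed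
    t htd htn htc htcl
  simp only [Set.mem_iInter] at hx
  refine ⟨x, (hx (Classical.arbitrary s)).1, fun y hy => (hx ⟨y, hy⟩).2⟩

lemma Delta_nonempty (N : ℕ) (hN : 1 ≤ N) : (Delta N).Nonempty := by
  refine ⟨fun i => if i = 0 then 1 else 0, ?_, ?_, ?_, ?_⟩
  · intro i; dsimp only; split <;> norm_num
  · intro i hi
    have : i ≠ 0 := by omega
    simp [this]
  · intro i hi
    have : i ≠ 0 := by omega
    simp [this]
  · have h0 : (0 : ℤ) ∈ Finset.Icc (1 - (N : ℤ)) 0 := by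
      simp only [Finset.mem_Icc]; omega
    classical
    rw [show (fun i : ℤ => (if i = 0 then (1:ℝ) else 0)) = fun i => if i = 0 then (1:ℝ) else 0 from rfl]
    rw [Finset.sum_ite_eq' (Finset.Icc (1 - (N : ℤ)) 0) 0 (fun _ => (1 : ℝ))]
    simp [h0]

end Aux

/-- The infimum `T_N*(p)` is attained: there is `x ∈ Δ_N` with
`T(x,p) = min_{y ∈ Δ_N} T(y,p)`. -/
theorem Tstar_attained (N : ℕ) (hN : 1 ≤ N) (p : ℝ) (hp : 0 < p) :
    ∃ x ∈ Delta N, Tval x p = Tstar N p := by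
  obtain ⟨x, hxD, hmin⟩ := exists_min_of_lsc (isCompact_Delta N) (isClosed_Delta N)
    (Delta_nonempty N hN) (lsc_Tval p)
  refine ⟨x, hxD, le_antisymm ?_ ?_⟩
  · refine le_sInf ?_
    rintro t ⟨y, hy, rfl⟩
    exact hmin y hy
  · exact sInf_le ⟨x, hxD, rfl⟩
end

section
/- For every N ≥ 1 there holds the inequality Φ_N ≥ T_N*(1/N). -/
open Finset Filter Topology
open scoped ENNReal

lemma sum_shift {M : Type*} [AddCommMonoid M] (f : ℤ → M) (a b c : ℤ) :
    ∑ j ∈ Finset.Icc (a + c) (b + c), f j = ∑ j ∈ Finset.Icc a b, f (j + c) := by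
  rw [← Finset.map_add_right_Icc, Finset.sum_map]
  rfl

lemma per_mul_s14 {M : Type*} (g : ℤ → M) (N : ℕ) (hg : ∀ i, g (i + N) = g i) :
    ∀ (k i : ℤ), g (i + k * N) = g i := by
  intro k
  induction k using Int.induction_on with
  | zero => simp
  | succ n ih =>
      intro i
      have e : i + ((n : ℤ) + 1) * N = (i + n * N) + N := by ring
      rw [e, hg, ih]
  | pred n ih =>
      intro i
      have e : i + (-(n : ℤ)) * N = (i + (-(n:ℤ) - 1) * N) + N := by ring
      have := ih i
      rw [e, hg] at this
      exact this

lemma per_dvd {M : Type*} (g : ℤ → M) (N : ℕ) (hg : ∀ i, g (i + N) = g i)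
    {a b : ℤ} (h : (N : ℤ) ∣ a - b) : g a = g b := by
  obtain ⟨k, hk⟩ := h
  have : a = b + k * N := by linarith
  rw [this, per_mul_s14 g N hg]

lemma emod_dvd_sub (c n : ℤ) : n ∣ c % n - c := by
  have := Int.emod_def c n
  exact ⟨-(c / n), by linarith⟩

lemma periodic_window_sum {M : Type*} [AddCommMonoid M] (g : ℤ → M) (N : ℕ) (hN : 1 ≤ N)
    (hg : ∀ i, g (i + N) = g i) (a : ℤ) :
    ∑ j ∈ Finset.Icc (a + 1) (a + N), g j = ∑ j ∈ Finset.Icc (1 : ℤ) (N : ℤ), g j := by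
  have hNpos : (0:ℤ) < N := by exact_mod_cast hN
  refine Finset.sum_nbij' (i := fun j => (j - 1) % N + 1) (j := fun j => (j - 1 - a) % N + (a + 1))
    ?_ ?_ ?_ ?_ ?_
  · intro j hj
    rw [Finset.mem_Icc] at hj ⊢
    have h1 := Int.emod_nonneg (j - 1) (by omega : (N:ℤ) ≠ 0)
    have h2 := Int.emod_lt_of_pos (j - 1) hNpos
    omega
  · intro j hj
    rw [Finset.mem_Icc] at hj ⊢
    have h1 := Int.emod_nonneg (j - 1 - a) (by omega : (N:ℤ) ≠ 0)
    have h2 := Int.emod_lt_of_pos (j - 1 - a) hNpos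
    omega
  · intro j hj
    rw [Finset.mem_Icc] at hj
    have e1 : ((j - 1) % N + 1 - 1 - a) % N = (j - 1 - a) % N := by
      have : (N:ℤ) ∣ ((j - 1) % N + 1 - 1 - a) - (j - 1 - a) := by
        have := emod_dvd_sub (j - 1) (N : ℤ)
        have e : ((j - 1) % N + 1 - 1 - a) - (j - 1 - a) = (j-1) % N - (j-1) := by ring
        rw [e]; exact this
      exact Int.ModEq.eq (Int.modEq_iff_dvd.mpr (by rw [show (j - 1 - a) - ((j-1)%N + 1 - 1 - a) = -(((j - 1) % N + 1 - 1 - a) - (j - 1 - a)) by ring]; exact dvd_neg.mpr this))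
    have e2 : (j - 1 - a) % N = j - 1 - a := Int.emod_eq_of_lt (by omega) (by omega)
    simp only [e1, e2]; ring
  · intro j hj
    rw [Finset.mem_Icc] at hj
    have e1 : ((j - 1 - a) % N + (a + 1) - 1) % N = (j - 1) % N := by
      have : (N:ℤ) ∣ ((j - 1 - a) % N + (a + 1) - 1) - (j - 1) := by
        have := emod_dvd_sub (j - 1 - a) (N : ℤ)
        have e : ((j - 1 - a) % N + (a + 1) - 1) - (j - 1) = (j-1-a) % N - (j-1-a) := by ring
        rw [e]; exact this
      exact Int.ModEq.eq (Int.modEq_iff_dvd.mpr (by rw [show (j-1) - ((j - 1 - a) % N + (a + 1) - 1) = -((((j - 1 - a) % N + (a + 1) - 1)) - (j - 1)) by ring]; exact dvd_neg.mpr this))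
    have e2 : (j - 1) % N = j - 1 := Int.emod_eq_of_lt (by omega) (by omega)
    simp only [e1, e2]; ring
  · intro j hj
    refine (per_dvd g N hg ?_).symm
    have d := emod_dvd_sub (j - 1) (N:ℤ)
    have e : ((j - 1) % N + 1) - j = (j-1) % N - (j-1) := by ring
    rw [e]
    exact d

noncomputable def Pfun (x : ℤ → ℝ) (i : ℤ) : ℝ :=
  ∑ j ∈ Finset.Icc 1 i, x j - ∑ j ∈ Finset.Icc (i + 1) 0, x j

lemma Icc_split (a b c : ℤ) (hab : a ≤ b) (hbc : b ≤ c) (f : ℤ → ℝ) :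
    ∑ j ∈ Finset.Icc (a+1) c, f j = ∑ j ∈ Finset.Icc (a+1) b, f j + ∑ j ∈ Finset.Icc (b+1) c, f j := by
  have e1 : Finset.Icc (a+1) c = Finset.Ioc a c := by ext k; simp [Finset.mem_Icc, Finset.mem_Ioc]
  have e2 : Finset.Icc (a+1) b = Finset.Ioc a b := by ext k; simp [Finset.mem_Icc, Finset.mem_Ioc]
  have e3 : Finset.Icc (b+1) c = Finset.Ioc b c := by ext k; simp [Finset.mem_Icc, Finset.mem_Ioc]
  have hd : Disjoint (Finset.Ioc a b) (Finset.Ioc b c) := by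
    rw [Finset.disjoint_left]
    intro k hk hk'
    rw [Finset.mem_Ioc] at hk hk'
    omega
  rw [e1, e2, e3, ← Finset.Ioc_union_Ioc_eq_Ioc hab hbc, Finset.sum_union hd]

lemma Pfun_step (x : ℤ → ℝ) (i : ℤ) : Pfun x (i + 1) = Pfun x i + x (i + 1) := by
  unfold Pfun
  by_cases h : 0 ≤ i
  · have e1 : ∑ j ∈ Finset.Icc (1:ℤ) (i+1), x j = ∑ j ∈ Finset.Icc (1:ℤ) i, x j + x (i+1) := by
      have := Icc_split 0 i (i+1) h (by omega) x
      simp only [zero_add] at this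
      rw [this]
      have : Finset.Icc (i+1) (i+1) = {i+1} := Finset.Icc_self _
      rw [this, Finset.sum_singleton]
    have e2 : Finset.Icc (i+1+1) (0:ℤ) = ∅ := Finset.Icc_eq_empty (by omega)
    have e3 : Finset.Icc (i+1) (0:ℤ) = ∅ := Finset.Icc_eq_empty (by omega)
    rw [e1, e2, e3]; simp
  · push_neg at h
    have e1 : Finset.Icc (1:ℤ) (i+1) = ∅ := Finset.Icc_eq_empty (by omega)
    have e2 : Finset.Icc (1:ℤ) i = ∅ := Finset.Icc_eq_empty (by omega)
    have e3 : ∑ j ∈ Finset.Icc (i+1) (0:ℤ), x j = x (i+1) + ∑ j ∈ Finset.Icc (i+1+1) (0:ℤ), x j := by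
      have := Icc_split i (i+1) 0 (by omega) (by omega) x
      rw [this]
      have : Finset.Icc (i+1) (i+1) = {i+1} := Finset.Icc_self _
      rw [this, Finset.sum_singleton]
    rw [e1, e2, e3]
    simp only [Finset.sum_empty]
    ring

lemma Pfun_sum (x : ℤ → ℝ) {a b : ℤ} (h : a ≤ b) :
    ∑ j ∈ Finset.Icc (a + 1) b, x j = Pfun x b - Pfun x a := by
  refine Int.le_induction (motive := fun b _ => ∑ j ∈ Finset.Icc (a + 1) b, x j = Pfun x b - Pfun x a) ?_ ?_ b h
  · rw [Finset.Icc_eq_empty (by omega)]; simp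
  · intro b hb ih
    have hs := Icc_split a b (b+1) hb (by omega) x
    rw [hs, ih, Pfun_step]
    have he : Finset.Icc (b+1) (b+1) = {b+1} := Finset.Icc_self _
    rw [he, Finset.sum_singleton]; ring

/-- For every `N ≥ 1`, `Φ_N ≥ T_N*(1/N)`. -/
theorem Phi_ge_Tstar (N : ℕ) (hN : 1 ≤ N) :
    Tstar N (1 / (N : ℝ)) ≤ PhiE N := by
  refine le_sInf ?_
  rintro t ⟨x, hx0, hxper, ⟨iw, hiw⟩, rfl⟩
  have hN0 : (0:ℝ) < N := by exact_mod_cast hN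
  have hNR : ((N:ℤ):ℝ) = (N:ℝ) := by push_cast; ring
  -- periodicity infrastructure for x
  have hxdvd : ∀ a b : ℤ, (N:ℤ) ∣ a - b → x a = x b := fun a b h => per_dvd x N hxper h
  set S := ∑ j ∈ Finset.Icc (1:ℤ) (N:ℤ), x j with hSdef
  have hwin : ∀ a : ℤ, ∑ j ∈ Finset.Icc (a+1) (a+(N:ℤ)), x j = S :=
    fun a => periodic_window_sum x N hN hxper a
  have hSpos : 0 < S := by
    have hm : x ((iw - 1) % (N:ℤ) + 1) = x iw := hxdvd _ _ (by
      have d := emod_dvd_sub (iw - 1) (N:ℤ)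
      rw [show ((iw - 1) % (N:ℤ) + 1) - iw = (iw - 1) % (N:ℤ) - (iw - 1) by ring]
      exact d)
    have hmem : (iw - 1) % (N:ℤ) + 1 ∈ Finset.Icc (1:ℤ) (N:ℤ) := by
      rw [Finset.mem_Icc]
      have h1 := Int.emod_nonneg (iw - 1) (by omega : (N:ℤ) ≠ 0)
      have h2 := Int.emod_lt_of_pos (iw - 1) (by exact_mod_cast hN : (0:ℤ) < (N:ℤ))
      omega
    have hpos : 0 < x ((iw - 1) % (N:ℤ) + 1) := by
      rcases lt_or_eq_of_le (hx0 ((iw - 1) % (N:ℤ) + 1)) with h | h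
      · exact h
      · exact absurd (hm ▸ h.symm) hiw
    calc (0:ℝ) < x ((iw - 1) % (N:ℤ) + 1) := hpos
      _ ≤ S := Finset.single_le_sum (fun i _ => hx0 i) hmem
  set A := S / (N:ℝ) with hAdef
  have hApos : 0 < A := div_pos hSpos hN0
  set G : ℤ → ℝ := fun i => Pfun x i - A * i with hGdef
  have hGsum : ∀ a b : ℤ, a ≤ b → ∑ j ∈ Finset.Icc (a+1) b, x j = A * (b - a) + (G b - G a) := by
    intro a b h
    rw [Pfun_sum x h]
    simp only [hGdef]
    push_cast
    ring
  have hGper : ∀ i, G (i + (N:ℤ)) = G i := by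
    intro i
    have h1 := hGsum i (i + N) (by omega)
    rw [hwin i] at h1
    have h3 : A * (N:ℝ) = S := by rw [hAdef]; field_simp
    push_cast at h1
    have h4 : A * ((i:ℝ) + (N:ℝ) - (i:ℝ)) = A * (N:ℝ) := by ring
    rw [h4, h3] at h1
    linarith
  obtain ⟨i₀, hi₀mem, hi₀max⟩ : ∃ i₀, (1 ≤ i₀ ∧ i₀ ≤ (N:ℤ)) ∧ ∀ k : ℤ, G k ≤ G i₀ := by
    obtain ⟨i₀, hmem, hmax⟩ := Finset.exists_max_image (Finset.Icc (1:ℤ) (N:ℤ)) G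
      ⟨1, by rw [Finset.mem_Icc]; constructor <;> omega⟩
    rw [Finset.mem_Icc] at hmem
    refine ⟨i₀, hmem, ?_⟩
    intro k
    have hk : G k = G ((k - 1) % (N:ℤ) + 1) := (per_dvd G N hGper (by
      have d := emod_dvd_sub (k - 1) (N:ℤ)
      rw [show ((k - 1) % (N:ℤ) + 1) - k = (k - 1) % (N:ℤ) - (k - 1) by ring]
      exact d)).symm
    rw [hk]
    refine hmax _ ?_
    rw [Finset.mem_Icc]
    have h1 := Int.emod_nonneg (k - 1) (by omega : (N:ℤ) ≠ 0)
    have h2 := Int.emod_lt_of_pos (k - 1) (by exact_mod_cast hN : (0:ℤ) < (N:ℤ))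
    omega
  have havg : ∀ i r : ℤ, 1 ≤ r → iavg x (i+1) (i+r) = A + (G (i+r) - G i) / (r:ℝ) := by
    intro i r hr
    have hrR : (0:ℝ) < (r:ℝ) := by exact_mod_cast hr
    unfold iavg
    rw [hGsum i (i + r) (by omega)]
    rw [show (i + r - (i + 1) + 1 : ℤ) = r by ring]
    push_cast
    field_simp
    ring
  have hmplus : ∀ i : ℤ, i < i₀ → (mplus x i ∈ {a : ℝ | ∃ r : ℤ, 1 ≤ r ∧ r ≤ i₀ - i ∧ a = iavg x (i+1) (i+r)} ∧
      (∀ r : ℤ, 1 ≤ r → r ≤ i₀ - i → iavg x (i+1) (i+r) ≤ mplus x i) ∧ A ≤ mplus x i) := by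
    intro i hi
    obtain ⟨r₀, hr₀mem, hr₀max⟩ := Finset.exists_max_image (Finset.Icc (1:ℤ) (i₀ - i))
      (fun r => iavg x (i+1) (i+r)) ⟨1, by rw [Finset.mem_Icc]; omega⟩
    have hr₀max' : ∀ r ∈ Finset.Icc (1:ℤ) (i₀ - i), iavg x (i+1) (i+r) ≤ iavg x (i+1) (i+r₀) :=
      hr₀max
    rw [Finset.mem_Icc] at hr₀mem
    have hs : (1:ℤ) ≤ i₀ - i := by omega
    have hub : ∀ r : ℤ, 1 ≤ r → iavg x (i+1) (i+r) ≤ iavg x (i+1) (i+r₀) := by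
      intro r hr
      by_cases hcase : r ≤ i₀ - i
      · exact hr₀max' r (by rw [Finset.mem_Icc]; exact ⟨hr, hcase⟩)
      · push_neg at hcase
        have h1 := havg i r hr
        have h2 := havg i (i₀ - i) hs
        rw [show i + (i₀ - i) = i₀ by ring] at h2
        have hG1 : G (i + r) ≤ G i₀ := hi₀max _
        have hG2 : G i ≤ G i₀ := hi₀max _
        have hrpos : (0:ℝ) < (r:ℝ) := by exact_mod_cast hr
        have hspos : (0:ℝ) < ((i₀ - i : ℤ):ℝ) := by exact_mod_cast hs
        have hsr : ((i₀ - i : ℤ):ℝ) ≤ (r:ℝ) := by exact_mod_cast hcase.le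
        have c1 : (G (i+r) - G i)/(r:ℝ) ≤ (G i₀ - G i)/(r:ℝ) := by gcongr
        have c2 : (G i₀ - G i)/(r:ℝ) ≤ (G i₀ - G i)/((i₀ - i : ℤ):ℝ) :=
          div_le_div_of_nonneg_left (by linarith) hspos hsr
        have c3 := hr₀max' (i₀ - i) (by rw [Finset.mem_Icc]; exact ⟨hs, le_refl _⟩)
        rw [show i + (i₀ - i) = i₀ by ring] at c3
        calc iavg x (i+1) (i+r) = A + (G (i+r) - G i)/(r:ℝ) := h1
          _ ≤ A + (G i₀ - G i)/((i₀ - i : ℤ):ℝ) := by linarith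
          _ = iavg x (i+1) i₀ := h2.symm
          _ ≤ iavg x (i+1) (i+r₀) := c3
    have hgrt : IsGreatest {a : ℝ | ∃ r : ℕ, 1 ≤ r ∧ a = iavg x (i + 1) (i + (r : ℤ))}
        (iavg x (i+1) (i+r₀)) := by
      constructor
      · exact ⟨r₀.toNat, by omega, by rw [Int.toNat_of_nonneg (by omega)]⟩
      · rintro a ⟨r, hr, rfl⟩
        exact hub r (by exact_mod_cast hr)
    have heq : mplus x i = iavg x (i+1) (i+r₀) := by
      unfold mplus; exact hgrt.csSup_eq
    have hAle : A ≤ iavg x (i+1) (i+r₀) := by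
      have h2 := havg i (i₀ - i) hs
      rw [show i + (i₀ - i) = i₀ by ring] at h2
      have hG2 : G i ≤ G i₀ := hi₀max _
      have hspos : (0:ℝ) < ((i₀ - i : ℤ):ℝ) := by exact_mod_cast hs
      have hdnn : 0 ≤ (G i₀ - G i)/((i₀ - i : ℤ):ℝ) := div_nonneg (by linarith) hspos.le
      have c3 := hr₀max' (i₀ - i) (by rw [Finset.mem_Icc]; exact ⟨hs, le_refl _⟩)
      rw [show i + (i₀ - i) = i₀ by ring] at c3
      calc A ≤ A + (G i₀ - G i)/((i₀ - i : ℤ):ℝ) := by linarith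
        _ = iavg x (i+1) i₀ := h2.symm
        _ ≤ iavg x (i+1) (i+r₀) := c3
    refine ⟨⟨r₀, hr₀mem.1, hr₀mem.2, heq⟩, ?_, ?_⟩
    · intro r h1 h2
      rw [heq]
      exact hr₀max' r (by rw [Finset.mem_Icc]; exact ⟨h1, h2⟩)
    · rw [heq]; exact hAle
  have hmplus0 : mplus x i₀ = A := by
    have hNZ : (1:ℤ) ≤ (N:ℤ) := by exact_mod_cast hN
    have hgrt : IsGreatest {a : ℝ | ∃ r : ℕ, 1 ≤ r ∧ a = iavg x (i₀ + 1) (i₀ + (r : ℤ))} A := by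
      constructor
      · refine ⟨N, hN, ?_⟩
        rw [havg i₀ (N:ℤ) hNZ, hGper i₀]
        simp
      · rintro a ⟨r, hr, rfl⟩
        have hrZ : (1:ℤ) ≤ (r:ℤ) := by exact_mod_cast hr
        rw [havg i₀ (r:ℤ) hrZ]
        have hG := hi₀max (i₀ + (r:ℤ))
        have hrpos : (0:ℝ) < ((r:ℤ):ℝ) := by exact_mod_cast hrZ
        have : (G (i₀ + (r:ℤ)) - G i₀)/((r:ℤ):ℝ) ≤ 0 :=
          div_nonpos_of_nonpos_of_nonneg (by linarith) hrpos.le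
        linarith
    unfold mplus; exact hgrt.csSup_eq
  have hmplusper : ∀ i, mplus x (i + (N:ℤ)) = mplus x i := by
    intro i
    have key : ∀ r : ℕ, iavg x (i + (N:ℤ) + 1) (i + (N:ℤ) + (r:ℤ)) = iavg x (i+1) (i+(r:ℤ)) := by
      intro r
      unfold iavg
      have e1 : Finset.Icc (i + (N:ℤ) + 1) (i + (N:ℤ) + (r:ℤ))
          = Finset.Icc ((i+1) + (N:ℤ)) ((i+(r:ℤ)) + (N:ℤ)) := by congr 1 <;> ring
      rw [e1, sum_shift]
      rw [Finset.sum_congr rfl (fun j _ => hxper j)]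
      have e3 : ((i + (N:ℤ) + (r:ℤ) - (i + (N:ℤ) + 1) + 1 : ℤ):ℝ) = ((i + (r:ℤ) - (i+1) + 1 : ℤ):ℝ) := by
        push_cast; ring
      rw [e3]
    unfold mplus
    congr 1
    ext a
    constructor
    · rintro ⟨r, hr, rfl⟩
      exact ⟨r, hr, key r⟩
    · rintro ⟨r, hr, rfl⟩
      exact ⟨r, hr, (key r).symm⟩
  set y : ℤ → ℝ := fun j => if 1 - (N:ℤ) ≤ j ∧ j ≤ 0 then x (i₀ + j) / S else 0 with hydef
  have hyval : ∀ j : ℤ, 1 - (N:ℤ) ≤ j → j ≤ 0 → y j = x (i₀ + j) / S := by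
    intro j h1 h2; simp only [hydef]; rw [if_pos ⟨h1, h2⟩]
  have hyzero : ∀ j : ℤ, ¬(1 - (N:ℤ) ≤ j ∧ j ≤ 0) → y j = 0 := by
    intro j h; simp only [hydef]; rw [if_neg h]
  have hyDelta : y ∈ Delta N := by
    simp only [Delta, Set.mem_setOf_eq]
    refine ⟨?_, ?_, ?_, ?_⟩
    · intro i
      simp only [hydef]
      split_ifs with hcond
      · exact div_nonneg (hx0 _) hSpos.le
      · exact le_refl 0
    · intro i hi
      exact hyzero i (by omega)
    · intro i hi
      exact hyzero i (by omega)
    · have e : ∀ j ∈ Finset.Icc (1 - (N:ℤ)) 0, y j = x (i₀ + j) / S := by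
        intro j hj
        rw [Finset.mem_Icc] at hj
        exact hyval j hj.1 hj.2
      rw [Finset.sum_congr rfl e, ← Finset.sum_div]
      have e3 : ∀ j ∈ Finset.Icc (1 - (N:ℤ)) 0, x (i₀ + j) = x (j + i₀) := by
        intro j _; rw [add_comm]
      rw [Finset.sum_congr rfl e3, ← sum_shift x (1 - (N:ℤ)) 0 i₀]
      have e4 : Finset.Icc (1 - (N:ℤ) + i₀) (0 + i₀)
          = Finset.Icc ((i₀ - (N:ℤ)) + 1) ((i₀ - (N:ℤ)) + (N:ℤ)) := by congr 1 <;> ring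
      rw [e4, hwin (i₀ - (N:ℤ))]
      field_simp
  have hmNeg : ∀ j : ℤ, 1 - (N:ℤ) ≤ j → j ≤ -1 → mNeg y j = mplus x (i₀ + j) / S := by
    intro j hj1 hj2
    obtain ⟨⟨r₀, hr₀1, hr₀2, heq⟩, hub, hAle⟩ := hmplus (i₀ + j) (by omega)
    have hr₀2' : r₀ ≤ -j := by omega
    have hsum : ∀ r : ℤ, 1 ≤ r → r ≤ -j →
        (∑ k ∈ Finset.Icc (j+1) (j+r), y k) / (r:ℝ) = iavg x (i₀ + j + 1) (i₀ + j + r) / S := by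
      intro r h1 h2
      have e : ∀ k ∈ Finset.Icc (j+1) (j+r), y k = x (i₀ + k) / S := by
        intro k hk
        rw [Finset.mem_Icc] at hk
        exact hyval k (by omega) (by omega)
      rw [Finset.sum_congr rfl e, ← Finset.sum_div]
      have e3 : ∀ k ∈ Finset.Icc (j+1) (j+r), x (i₀ + k) = x (k + i₀) := by
        intro k _; rw [add_comm]
      rw [Finset.sum_congr rfl e3, ← sum_shift x (j+1) (j+r) i₀]
      have e4 : Finset.Icc (j + 1 + i₀) (j + r + i₀)
          = Finset.Icc (i₀ + j + 1) (i₀ + j + r) := by congr 1 <;> ring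
      rw [e4]
      unfold iavg
      rw [show (i₀ + j + r - (i₀ + j + 1) + 1 : ℤ) = r by ring]
      rw [div_div, div_div, mul_comm]
    have hgrt : IsGreatest {a : ℝ | ∃ r : ℤ, 1 ≤ r ∧ r ≤ -j ∧
        a = (∑ k ∈ Finset.Icc (j+1) (j+r), y k) / (r:ℝ)} (mplus x (i₀ + j) / S) := by
      constructor
      · exact ⟨r₀, hr₀1, hr₀2', by rw [hsum r₀ hr₀1 hr₀2', ← heq]⟩
      · rintro a ⟨r, h1, h2, rfl⟩
        rw [hsum r h1 h2]
        have hle := hub r h1 (by omega)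
        gcongr
    unfold mNeg; exact hgrt.csSup_eq
  set h : ℤ → ℝ≥0∞ := fun i => ENNReal.ofReal (x i) / ENNReal.ofReal (mplus x i) with hhdef
  have hterm : ∀ j : ℤ, 1 - (N:ℤ) ≤ j → j ≤ -1 →
      ENNReal.ofReal (y j) / ENNReal.ofReal (mNeg y j) = h (i₀ + j) := by
    intro j h1 h2
    rw [hmNeg j h1 h2, hyval j h1 (by omega)]
    have hmp : 0 < mplus x (i₀ + j) := lt_of_lt_of_le hApos (hmplus (i₀ + j) (by omega)).2.2
    simp only [hhdef]
    rw [← ENNReal.ofReal_div_of_pos (div_pos hmp hSpos), ← ENNReal.ofReal_div_of_pos hmp]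
    congr 1
    rw [div_div_div_cancel_right₀]
    exact hSpos.ne'
  have htsum : (∑' i : {z : ℤ // z ≤ -1}, ENNReal.ofReal (y i) / ENNReal.ofReal (mNeg y i))
      = ∑ j ∈ Finset.Icc (1 - (N:ℤ)) (-1), h (i₀ + j) := by
    have hsupp : ∀ b : {z : ℤ // z ≤ -1},
        b ∉ (Finset.Icc (1-(N:ℤ)) (-1)).subtype (fun z => z ≤ -1) →
        ENNReal.ofReal (y b) / ENNReal.ofReal (mNeg y b) = 0 := by
      intro b hb
      have hnmem : (b:ℤ) ∉ Finset.Icc (1-(N:ℤ)) (-1) := fun hmem => hb (Finset.mem_subtype.mpr hmem)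
      rw [Finset.mem_Icc] at hnmem
      push_neg at hnmem
      have hb2 := b.2
      have hyb : y (b:ℤ) = 0 := hyzero _ (by
        rintro ⟨ha, _⟩
        have := hnmem ha
        omega)
      rw [hyb]
      simp
    rw [tsum_eq_sum hsupp]
    rw [Finset.sum_subtype_eq_sum_filter
      (f := fun z : ℤ => ENNReal.ofReal (y z) / ENNReal.ofReal (mNeg y z))
      (s := Finset.Icc (1-(N:ℤ)) (-1)) (p := fun z => z ≤ -1)]
    have hfil : Finset.filter (fun z => z ≤ -1) (Finset.Icc (1-(N:ℤ)) (-1))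
        = Finset.Icc (1-(N:ℤ)) (-1) := by
      refine Finset.filter_true_of_mem ?_
      intro z hz
      rw [Finset.mem_Icc] at hz
      omega
    rw [hfil]
    refine Finset.sum_congr rfl ?_
    intro j hj
    rw [Finset.mem_Icc] at hj
    exact hterm j hj.1 hj.2
  have hy0 : ENNReal.ofReal (y 0) / ENNReal.ofReal (1/(N:ℝ)) = h i₀ := by
    rw [hyval 0 (by omega) le_rfl]
    simp only [add_zero]
    rw [← ENNReal.ofReal_div_of_pos (by positivity : (0:ℝ) < 1/(N:ℝ))]
    simp only [hhdef]
    rw [hmplus0, ← ENNReal.ofReal_div_of_pos hApos]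
    congr 1
    rw [hAdef]
    field_simp
  have hTval : Tval y (1/(N:ℝ)) = SmaxE N x := by
    unfold Tval SmaxE
    rw [htsum, hy0]
    have hstep1 : ∑ j ∈ Finset.Icc (1-(N:ℤ)) (-1), h (i₀+j) + h i₀
        = ∑ j ∈ Finset.Icc (1-(N:ℤ)) 0, h (i₀+j) := by
      have hins : Finset.Icc (1-(N:ℤ)) 0 = insert 0 (Finset.Icc (1-(N:ℤ)) (-1)) := by
        ext k
        simp only [Finset.mem_Icc, Finset.mem_insert]
        omega
      rw [hins, Finset.sum_insert (by rw [Finset.mem_Icc]; omega)]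
      simp only [add_zero]
      rw [add_comm]
    rw [hstep1]
    have hper' : ∀ i, h (i + (N:ℤ)) = h i := by
      intro i
      simp only [hhdef]
      rw [hxper i, hmplusper i]
    have e1 : ∀ j ∈ Finset.Icc (1-(N:ℤ)) 0, h (i₀ + j) = h (j + i₀) := by
      intro j _; rw [add_comm]
    rw [Finset.sum_congr rfl e1, ← sum_shift h (1-(N:ℤ)) 0 i₀]
    have e2 : Finset.Icc (1-(N:ℤ)+i₀) (0+i₀)
        = Finset.Icc ((i₀-(N:ℤ))+1) ((i₀-(N:ℤ))+(N:ℤ)) := by congr 1 <;> ring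
    rw [e2, periodic_window_sum h N hN hper' (i₀ - (N:ℤ))]
  calc Tstar N (1 / (N:ℝ)) ≤ Tval y (1/(N:ℝ)) := sInf_le ⟨y, hyDelta, rfl⟩
    _ = SmaxE N x := hTval
end
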